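/- Let G be a finite connected graph. Then CBP(G) is Hirsch: its graph-diameter is at most k − d, where k is the number of facets of CBP(G) and d = dim CBP(G). -/

import Mathlib

/-!
Every vertex of `CBP(G)` is an incidence vector `χ^𝓐` of a connected family of blocks. Since the
polytope lies in the unit cube, `χ^𝓐` and `χ^(𝓐 ∪ {X})` span an edge of it whenever both families
are connected. A connected family `𝓓` strictly inside a connected family `𝓐` can always be grown
by one block of `𝓐 \ 𝓓` while staying connected, so `χ^𝓓` and `χ^𝓐` are joined by a path of
length `|𝓐 \ 𝓓|`. Going through `𝓐 ∪ 𝓒` when `𝓐` and `𝓒` share a block, and through `∅`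
otherwise, joins any two vertices `χ^𝓐`, `χ^𝓒` by a path of length at most `n`, the number of
blocks. On the other hand `CBP(G)` is full-dimensional and each of the `2n` inequalities
`0 ≤ x_B ≤ 1` defines a facet (for `x_B ≤ 1` this uses that `G` is connected), so `k - d ≥ n`.
-/

open Set

noncomputable section

namespace ConnectedBlocksPaper

variable {V : Type} [Fintype V] [DecidableEq V]

/-- A subgraph is 2-connected: at least 3 vertices and removing any vertex keeps it connected. -/
def IsTwoConnectedSub (G : SimpleGraph V) (H : G.Subgraph) : Prop :=
  3 ≤ H.verts.ncard ∧ ∀ v ∈ H.verts, (H.deleteVerts {v}).Connected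

/-- A block of `G`: a maximal 2-connected subgraph, or a bridge together with its two
incident vertices. -/
def IsBlock (G : SimpleGraph V) (B : G.Subgraph) : Prop :=
  (IsTwoConnectedSub G B ∧ ∀ B' : G.Subgraph, IsTwoConnectedSub G B' → B ≤ B' → B' = B)
  ∨ (∃ (u v : V) (h : G.Adj u v), G.IsBridge s(u, v) ∧ B = G.subgraphOfAdj h)

/-- The set `𝓑` of blocks of `G`, as a type. -/
abbrev Block (G : SimpleGraph V) := {B : G.Subgraph // IsBlock G B}

/-- The subgraph `G[𝓐]` induced by a set of blocks. -/
def blockUnion (G : SimpleGraph V) (𝓐 : Set (Block G)) : G.Subgraph :=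
  ⨆ B ∈ 𝓐, (B : G.Subgraph)

/-- `G[𝓐]` is connected (the empty set of blocks counts as connected). -/
def ConnBlocks (G : SimpleGraph V) (𝓐 : Set (Block G)) : Prop :=
  𝓐 = ∅ ∨ (blockUnion G 𝓐).Connected

/-- The incidence vector `χ^𝓐 ∈ {0,1}^𝓑` of a set of blocks `𝓐 ⊆ 𝓑`. -/
def incVec (G : SimpleGraph V) (𝓐 : Set (Block G)) : Block G → ℝ :=
  Set.indicator 𝓐 1

/-- The connected blocks polytope `CBP(G) ⊆ ℝ^𝓑`. -/
def CBP (G : SimpleGraph V) : Set (Block G → ℝ) :=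
  convexHull ℝ {x | ∃ 𝓐 : Set (Block G), ConnBlocks G 𝓐 ∧ x = incVec G 𝓐}

/-- `F` is a face of the convex set `P`. -/
def IsFaceOf {E : Type*} [AddCommGroup E] [Module ℝ E] (P F : Set E) : Prop :=
  F ⊆ P ∧ Convex ℝ F ∧
    ∀ x ∈ P, ∀ y ∈ P, ∀ t : ℝ, 0 < t → t < 1 →
      t • x + (1 - t) • y ∈ F → x ∈ F ∧ y ∈ F

/-- The dimension of a polytope: the dimension of its affine hull. -/
def polyDim {E : Type*} [AddCommGroup E] [Module ℝ E] (P : Set E) : ℕ :=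
  Module.finrank ℝ (affineSpan ℝ P).direction

/-- A facet is a face of dimension `dim P - 1`. -/
def IsFacetOf {E : Type*} [AddCommGroup E] [Module ℝ E] (P F : Set E) : Prop :=
  IsFaceOf P F ∧ polyDim F = polyDim P - 1

/-- `v` is a cut vertex of `G`: deleting `v` from the connected graph `G` leaves more than
one component. -/
def IsCutVertex (G : SimpleGraph V) (v : V) : Prop :=
  ¬ (G.induce ({v}ᶜ : Set V)).Preconnected

/-- `𝓑⟨𝓐⟩`: the smallest set of blocks inducing a connected subgraph and containing `𝓐`. -/
def blockClosure (G : SimpleGraph V) (𝓐 : Set (Block G)) : Set (Block G) :=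
  ⋂₀ {𝓒 : Set (Block G) | 𝓐 ⊆ 𝓒 ∧ ConnBlocks G 𝓒}

/-- An independent set of blocks: no two blocks share a common vertex. -/
def IndepBlocks (G : SimpleGraph V) (𝓘 : Set (Block G)) : Prop :=
  ∀ B₁ ∈ 𝓘, ∀ B₂ ∈ 𝓘, B₁ ≠ B₂ →
    ((B₁ : G.Subgraph).verts ∩ (B₂ : G.Subgraph).verts) = ∅

/-- `(𝓘, α)` is an independent blocks inequality. -/
def IsIBI (G : SimpleGraph V) (𝓘 : Set (Block G)) (α : Block G → ℤ) : Prop :=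
  IndepBlocks G 𝓘 ∧
  (∀ B, B ∉ blockClosure G 𝓘 → α B = 0) ∧
  (∀ B ∈ 𝓘, α B = 1) ∧
  (∀ B ∈ blockClosure G 𝓘 \ 𝓘, α B ≤ 0) ∧
  (∑ᶠ B ∈ blockClosure G 𝓘 \ 𝓘, α B = -((𝓘.ncard : ℤ) - 1)) ∧
  (∀ I ⊆ 𝓘, ∑ᶠ B ∈ blockClosure G I \ 𝓘, α B ≤ -((I.ncard : ℤ) - 1))

/-- `𝓑[H]`: the set of blocks (of `G`) of the subgraph `H`. -/
def blocksOf (G : SimpleGraph V) (H : G.Subgraph) : Set (Block G) :=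
  {B : Block G | (B : G.Subgraph) ≤ H}

/-- `𝒦_v`: the components of `G - v` with `v` (and its incident edges) added back. -/
def Kv (G : SimpleGraph V) (v : V) : Set G.Subgraph :=
  {H | ∃ C : (G.induce ({v}ᶜ : Set V)).ConnectedComponent,
        H = (⊤ : G.Subgraph).induce (Subtype.val '' C.supp ∪ {v})}

/-- A polytope is simple if every vertex lies in exactly `dim P` facets. -/
def IsSimplePolytope {E : Type*} [AddCommGroup E] [Module ℝ E] (P : Set E) : Prop :=
  ∀ x ∈ P.extremePoints ℝ, {F : Set E | IsFacetOf P F ∧ x ∈ F}.ncard = polyDim P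

/-- A simplex: the convex hull of an affinely independent finite set. -/
def IsSimplex {E : Type*} [AddCommGroup E] [Module ℝ E] (F : Set E) : Prop :=
  ∃ s : Finset E, AffineIndependent ℝ ((↑) : s → E) ∧ F = convexHull ℝ (s : Set E)

/-- A polytope is simplicial if every facet is a simplex. -/
def IsSimplicialPolytope {E : Type*} [AddCommGroup E] [Module ℝ E] (P : Set E) : Prop :=
  ∀ F : Set E, IsFacetOf P F → IsSimplex F

/-- The graph of a polytope: extreme points, adjacent when they span a 1-dimensional face. -/
def polyGraph {E : Type*} [AddCommGroup E] [Module ℝ E] (P : Set E) : SimpleGraph E where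
  Adj x y := x ≠ y ∧ x ∈ P.extremePoints ℝ ∧ y ∈ P.extremePoints ℝ ∧
    IsFaceOf P (segment ℝ x y) ∧ polyDim (segment ℝ x y) = 1
  symm := by
    constructor
    rintro x y ⟨hxy, hx, hy, hF, hd⟩
    exact ⟨hxy.symm, hy, hx, by rwa [segment_symm], by rwa [segment_symm]⟩
  loopless := by constructor; rintro x ⟨h, -⟩; exact h rfl


end ConnectedBlocksPaper

namespace SimpleGraph.Walk

variable {V : Type*} {G : SimpleGraph V}

theorem IsCycle.connected_toSubgraph_deleteVerts_start {x : V} {c : G.Walk x x}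
    (hc : c.IsCycle) : (c.toSubgraph.deleteVerts {x}).Connected := by
  have htail : ¬ c.tail.Nil := by
    rw [not_nil_iff_lt_length, length_tail]
    have := hc.three_le_length
    omega
  -- Removing `x` from the cycle leaves the path `c.tail.dropLast`.
  set p := c.tail.dropLast
  have hp : p.support ++ [x] = c.tail.support := support_dropLast_concat htail
  have hx : x ∉ p.support := fun h =>
    (List.nodup_append.1 (hp ▸ hc.isPath_tail.support_nodup)).2.2 x h x
      (List.mem_singleton_self x) rfl
  have hverts : p.toSubgraph.verts = (c.toSubgraph.deleteVerts {x}).verts := by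
    ext v
    rw [Subgraph.deleteVerts_verts, verts_toSubgraph, verts_toSubgraph,
      ← cons_support_tail hc.not_nil, ← hp]
    by_cases hv : v = x
    · simp [hv, hx]
    · simp [hv]
  refine p.toSubgraph_connected.mono' (fun v w hvw => ?_) hverts
  have hv := hverts ▸ hvw.fst_mem
  have hw := hverts ▸ hvw.snd_mem
  refine Subgraph.deleteVerts_adj.2 ⟨hv.1, hv.2, hw.1, hw.2, ?_⟩
  rw [adj_toSubgraph_iff_mem_edges] at hvw ⊢
  rw [edges_dropLast, edges_tail] at hvw
  exact List.tail_subset _ (List.dropLast_subset _ hvw)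

end SimpleGraph.Walk

namespace ConnectedBlocksPaper

section Faces

variable {E : Type*} [AddCommGroup E] [Module ℝ E]

theorem IsFaceOf.inter_of_subset {P Q F : Set E} (hF : IsFaceOf Q F) (hPQ : P ⊆ Q)
    (hP : Convex ℝ P) : IsFaceOf P (P ∩ F) :=
  ⟨inter_subset_left, hP.inter hF.2.1, fun x hx y hy t ht₀ ht₁ hxy =>
    have h := hF.2.2 x (hPQ hx) y (hPQ hy) t ht₀ ht₁ hxy.2
    ⟨⟨hx, h.1⟩, ⟨hy, h.2⟩⟩⟩

theorem IsFaceOf.subset_convexHull_inter {s F : Set E} (hs : s.Finite)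
    (hF : IsFaceOf (convexHull ℝ s) F) : F ⊆ convexHull ℝ (s ∩ F) := by
  induction s, hs using Set.Finite.induction_on generalizing F with
  | empty => simpa using hF.1
  | @insert a s _ _ ih =>
    intro x hx
    rcases s.eq_empty_or_nonempty with rfl | hne
    · obtain rfl : x = a := by simpa using hF.1 hx
      exact subset_convexHull ℝ _ ⟨mem_insert _ _, hx⟩
    have hsub : convexHull ℝ s ⊆ convexHull ℝ (insert a s) :=
      convexHull_mono (subset_insert a s)
    have hmono : s ∩ (convexHull ℝ s ∩ F) ⊆ insert a s ∩ F := fun z hz =>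
      ⟨mem_insert_of_mem _ hz.1, hz.2.2⟩
    have hF' : ∀ y ∈ convexHull ℝ s, y ∈ F → y ∈ convexHull ℝ (insert a s ∩ F) := fun y hy hyF =>
      convexHull_mono hmono (ih (hF.inter_of_subset hsub (convex_convexHull ℝ s)) ⟨hy, hyF⟩)
    have ha : a ∈ F → a ∈ convexHull ℝ (insert a s ∩ F) := fun haF =>
      subset_convexHull ℝ _ ⟨mem_insert _ _, haF⟩
    have hx' := hF.1 hx
    simp only [convexHull_insert hne, mem_convexJoin, mem_singleton_iff, exists_eq_left] at hx'
    obtain ⟨y, hy, hxy⟩ := hx'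
    rw [← insert_endpoints_openSegment] at hxy
    rcases hxy with rfl | rfl | ⟨t, u, ht, hu, htu, rfl⟩
    · exact ha hx
    · exact hF' _ hy hx
    · obtain ⟨haF, hyF⟩ := hF.2.2 a (subset_convexHull ℝ _ (mem_insert _ _)) y (hsub hy) t ht
        (by linarith) (by rwa [← htu, add_sub_cancel_left])
      exact (convex_convexHull ℝ _).segment_subset (ha haF) (hF' y hy hyF)
        (openSegment_subset_segment ℝ _ _ ⟨t, u, ht, hu, htu, rfl⟩)

theorem finite_setOf_isFaceOf_convexHull {s : Set E} (hs : s.Finite) :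
    {F | IsFaceOf (convexHull ℝ s) F}.Finite := by
  refine (hs.finite_subsets.image (convexHull ℝ)).subset fun F hF => ⟨s ∩ F, inter_subset_left, ?_⟩
  exact (convexHull_min inter_subset_right hF.2.1).antisymm (hF.subset_convexHull_inter hs)

theorem polyDim_segment {x y : E} (hxy : x ≠ y) : polyDim (segment ℝ x y) = 1 := by
  rw [polyDim, ← convexHull_pair, affineSpan_convexHull, direction_affineSpan, vectorSpan_pair]
  exact finrank_span_singleton (vsub_ne_zero.2 hxy)

end Faces

section Cube

variable {ι : Type*}

def cubeFace (S T : Set ι) : Set (ι → ℝ) :=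
  {x ∈ Icc 0 1 | EqOn x 1 S ∧ EqOn x 0 T}

theorem convex_cubeFace (S T : Set ι) : Convex ℝ (cubeFace S T) := by
  rintro x ⟨hx, hxS, hxT⟩ y ⟨hy, hyS, hyT⟩ a b ha hb hab
  refine ⟨convex_Icc 0 1 hx hy ha hb hab, fun i hi => ?_, fun i hi => ?_⟩
  · simp [hxS hi, hyS hi, hab]
  · simp [hxT hi, hyT hi]

theorem isFaceOf_cubeFace (S T : Set ι) : IsFaceOf (Icc 0 1) (cubeFace S T) := by
  refine ⟨fun x hx => hx.1, convex_cubeFace S T, fun x hx y hy t ht₀ ht₁ hxy => ?_⟩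
  obtain ⟨-, hS, hT⟩ := hxy
  have h1 : ∀ i ∈ S, x i = 1 ∧ y i = 1 := fun i hi => by
    have h := hS hi
    simp only [Pi.add_apply, Pi.smul_apply, smul_eq_mul, Pi.one_apply] at h
    have hxi : x i ≤ 1 := hx.2 i
    have hyi : y i ≤ 1 := hy.2 i
    constructor <;> nlinarith
  have h0 : ∀ i ∈ T, x i = 0 ∧ y i = 0 := fun i hi => by
    have h := hT hi
    simp only [Pi.add_apply, Pi.smul_apply, smul_eq_mul, Pi.zero_apply] at h
    have hxi : 0 ≤ x i := hx.1 i
    have hyi : 0 ≤ y i := hy.1 i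
    constructor <;> nlinarith
  exact ⟨⟨hx, fun i hi => (h1 i hi).1, fun i hi => (h0 i hi).1⟩,
    ⟨hy, fun i hi => (h1 i hi).2, fun i hi => (h0 i hi).2⟩⟩

theorem indicator_one_mem_Icc (S : Set ι) : S.indicator 1 ∈ Icc (0 : ι → ℝ) 1 := by
  constructor <;> intro i <;> by_cases h : i ∈ S <;> simp [h]

theorem indicator_one_mem_cubeFace {S S' T : Set ι} (hS' : S' ⊆ S) (hT : Disjoint S T) :
    S.indicator 1 ∈ cubeFace S' T := by
  refine ⟨indicator_one_mem_Icc S, fun i hi => ?_, fun i hi => ?_⟩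
  · simp [hS' hi]
  · simp [hT.notMem_of_mem_right hi]

theorem segment_indicator_insert_eq_cubeFace (S : Set ι) (b : ι) :
    segment ℝ (S.indicator 1) ((insert b S).indicator 1) = cubeFace S (insert b S)ᶜ := by
  refine Subset.antisymm ((convex_cubeFace _ _).segment_subset
    (indicator_one_mem_cubeFace subset_rfl (disjoint_compl_right.mono_left (subset_insert b S)))
    (indicator_one_mem_cubeFace (subset_insert b S) disjoint_compl_right)) ?_
  rintro x ⟨hx, hS, hT⟩
  refine ⟨1 - x b, x b, sub_nonneg.2 (hx.2 b), hx.1 b, by ring, funext fun i => ?_⟩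
  by_cases hiS : i ∈ S
  · simp [hiS, hS hiS]
  by_cases hib : i = b
  · subst hib; simp [hiS]
  · simp [hiS, hib, hT (show i ∉ insert b S by simp [hiS, hib])]

theorem indicator_one_mem_extremePoints {P : Set (ι → ℝ)} (hP : P ⊆ Icc 0 1) {S : Set ι}
    (hS : S.indicator 1 ∈ P) : S.indicator 1 ∈ P.extremePoints ℝ := by
  refine inter_extremePoints_subset_extremePoints_of_subset hP ⟨hS, ?_⟩
  rw [← pi_univ_Icc, extremePoints_pi]
  intro i _
  by_cases h : i ∈ S <;> simp [h]

variable {P : Set (ι → ℝ)}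

theorem isFaceOf_segment_indicator_insert (hP : Convex ℝ P) (hP₁ : P ⊆ Icc 0 1) {S : Set ι}
    {b : ι} (hS : S.indicator 1 ∈ P) (hbS : (insert b S).indicator 1 ∈ P) :
    IsFaceOf P (segment ℝ (S.indicator 1) ((insert b S).indicator 1)) := by
  have h := (isFaceOf_cubeFace S (insert b S)ᶜ).inter_of_subset hP₁ hP
  rwa [← segment_indicator_insert_eq_cubeFace, inter_eq_right.2 (hP.segment_subset hS hbS)] at h

theorem polyGraph_adj_indicator_insert (hP : Convex ℝ P) (hP₁ : P ⊆ Icc 0 1) {S : Set ι}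
    {b : ι} (hb : b ∉ S) (hS : S.indicator 1 ∈ P) (hbS : (insert b S).indicator 1 ∈ P) :
    (polyGraph P).Adj (S.indicator 1) ((insert b S).indicator 1) := by
  have hne : S.indicator (1 : ι → ℝ) ≠ (insert b S).indicator 1 := fun h =>
    hb (indicator_one_inj ℝ h ▸ mem_insert b S)
  exact ⟨hne, indicator_one_mem_extremePoints hP₁ hS, indicator_one_mem_extremePoints hP₁ hbS,
    isFaceOf_segment_indicator_insert hP hP₁ hS hbS, polyDim_segment hne⟩

def coordFacet (P : Set (ι → ℝ)) (i : ι) (b : Bool) : Set (ι → ℝ) :=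
  {x ∈ P | x i = b.toNat}

theorem isFaceOf_coordFacet (hP : Convex ℝ P) (hP₁ : P ⊆ Icc 0 1) (i : ι) (b : Bool) :
    IsFaceOf P (coordFacet P i b) := by
  cases b
  · convert (isFaceOf_cubeFace ∅ {i}).inter_of_subset hP₁ hP using 1
    ext x
    simpa [coordFacet, cubeFace] using fun hx _ => hP₁ hx
  · convert (isFaceOf_cubeFace {i} ∅).inter_of_subset hP₁ hP using 1
    ext x
    simpa [coordFacet, cubeFace] using fun hx _ => hP₁ hx

variable [DecidableEq ι]

theorem indicator_insert_sub_indicator {S : Set ι} {b : ι} (hb : b ∉ S) :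
    (insert b S).indicator 1 - S.indicator 1 = (Pi.single b 1 : ι → ℝ) := by
  funext i
  by_cases hib : i = b
  · subst hib; simp [hb]
  · by_cases hiS : i ∈ S <;> simp [hib, hiS]

theorem single_mem_vectorSpan_of_indicator_mem {s : Set (ι → ℝ)} {S : Set ι} {b : ι}
    (hb : b ∉ S) (hS : S.indicator 1 ∈ s) (hbS : (insert b S).indicator 1 ∈ s) :
    Pi.single b 1 ∈ vectorSpan ℝ s := by
  simpa [indicator_insert_sub_indicator hb] using vsub_mem_vectorSpan ℝ hbS hS

theorem coordFacet_injective (h₀ : 0 ∈ P) (hsingle : ∀ i, Pi.single i 1 ∈ P) :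
    Function.Injective fun p : Bool × ι => coordFacet P p.2 p.1 := by
  rintro ⟨b, i⟩ ⟨b', i'⟩ h
  have key : ∀ x ∈ P, (x i = b.toNat ↔ x i' = b'.toNat) := fun x hx => by
    simpa [coordFacet, hx] using congrArg (x ∈ ·) h
  obtain rfl : b = b' := by
    have := key 0 h₀
    cases b <;> cases b' <;> simp_all
  refine Prod.ext rfl ?_
  by_contra hii'
  have := key _ (hsingle i)
  cases b <;> simp [Ne.symm hii'] at this

variable [Fintype ι]

theorem eq_top_of_forall_single_mem {p : Submodule ℝ (ι → ℝ)}
    (h : ∀ i, Pi.single i 1 ∈ p) : p = ⊤ := by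
  rw [eq_top_iff, ← (Pi.basisFun ℝ ι).span_eq, Submodule.span_le]
  rintro _ ⟨i, rfl⟩
  simpa using h i

theorem finrank_vectorSpan_of_forall_apply_eq {s : Set (ι → ℝ)} {j : ι} {c : ℝ}
    (hc : ∀ y ∈ s, y j = c) (h : ∀ i ≠ j, Pi.single i 1 ∈ vectorSpan ℝ s) :
    Module.finrank ℝ (vectorSpan ℝ s) = Fintype.card ι - 1 := by
  have hker : vectorSpan ℝ s ≤ LinearMap.ker (LinearMap.proj j) := by
    rw [vectorSpan_def, Submodule.span_le]
    rintro _ ⟨x, hx, y, hy, rfl⟩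
    simp [hc x hx, hc y hy]
  have hcompl : IsCompl (vectorSpan ℝ s) (ℝ ∙ Pi.single j 1) := by
    constructor
    · rw [Submodule.disjoint_def]
      intro x hx hxj
      obtain ⟨r, rfl⟩ := Submodule.mem_span_singleton.1 hxj
      simpa using hker hx
    · refine codisjoint_iff.2 (eq_top_of_forall_single_mem fun i => ?_)
      by_cases hij : i = j
      · exact Submodule.mem_sup_right (hij ▸ Submodule.mem_span_singleton_self _)
      · exact Submodule.mem_sup_left (h i hij)
  have := Submodule.finrank_add_eq_of_isCompl hcompl
  rw [finrank_span_singleton (by simp), Module.finrank_fintype_fun_eq_card] at this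
  omega

end Cube

variable {V : Type} {G : SimpleGraph V}

theorem isTwoConnectedSub_toSubgraph {u : V} {c : G.Walk u u} (hc : c.IsCycle) :
    IsTwoConnectedSub G c.toSubgraph := by
  classical
  refine ⟨?_, fun x hx => ?_⟩
  · have h3 : ({u, c.snd, c.penultimate} : Set V).ncard = 3 :=
      Set.ncard_eq_three.2 ⟨_, _, _, (c.adj_snd hc.not_nil).ne,
        (c.adj_penultimate hc.not_nil).ne.symm, hc.snd_ne_penultimate, rfl⟩
    rw [← h3]
    refine Set.ncard_le_ncard (insert_subset c.start_mem_verts_toSubgraph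
      (insert_subset (c.toSubgraph_adj_snd hc.not_nil).snd_mem
        (singleton_subset_iff.2 (c.toSubgraph_adj_penultimate hc.not_nil).fst_mem)))
      (c.verts_toSubgraph ▸ c.support.finite_toSet)
  · rw [SimpleGraph.Walk.mem_verts_toSubgraph] at hx
    rw [← c.toSubgraph_rotate hx]
    exact (hc.rotate hx).connected_toSubgraph_deleteVerts_start

theorem IsTwoConnectedSub.connected {H : G.Subgraph} (h : IsTwoConnectedSub G H) :
    H.Connected := by
  have hfin : H.verts.Finite := Set.finite_of_ncard_pos (by linarith [h.1])
  obtain ⟨a, b, c, ha, hb, hc, hab, hac, hbc⟩ := (Set.two_lt_ncard_iff hfin).1 h.1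
  refine (SimpleGraph.Subgraph.connected_sup (h.2 a ha).preconnected (h.2 b hb).preconnected
    ⟨c, ⟨hc, hac.symm⟩, ⟨hc, hbc.symm⟩⟩).mono
    (sup_le SimpleGraph.Subgraph.deleteVerts_le SimpleGraph.Subgraph.deleteVerts_le) ?_
  ext v
  by_cases hva : v = a
  · subst hva; simp [hab]
  · simpa [hva] using fun hv _ => hv

theorem exists_block_adj [Finite V] {u v : V} (h : G.Adj u v) :
    ∃ B : Block G, (B : G.Subgraph).Adj u v := by
  by_cases hbr : G.IsBridge s(u, v)
  · exact ⟨⟨G.subgraphOfAdj h, Or.inr ⟨u, v, h, hbr, rfl⟩⟩, by simp⟩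
  rw [SimpleGraph.isBridge_iff_forall_cycle_notMem h] at hbr
  push Not at hbr
  obtain ⟨w, c, hc, he⟩ := hbr
  obtain ⟨B, hcB, hB⟩ := Finite.exists_le_maximal (isTwoConnectedSub_toSubgraph hc)
  exact ⟨⟨B, Or.inl ⟨hB.prop, fun B' hB' hle => le_antisymm (hB.2 hB' hle) hle⟩⟩,
    hcB.2 (SimpleGraph.Walk.adj_toSubgraph_iff_mem_edges.2 he)⟩

theorem Block.connected (B : Block G) : (B : G.Subgraph).Connected := by
  obtain ⟨B, ⟨hB, -⟩ | ⟨u, v, h, -, rfl⟩⟩ := B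
  · exact hB.connected
  · exact SimpleGraph.Subgraph.subgraphOfAdj_connected h

theorem blockUnion_adj {𝓐 : Set (Block G)} {a b : V} :
    (blockUnion G 𝓐).Adj a b ↔ ∃ X ∈ 𝓐, (X : G.Subgraph).Adj a b := by
  simp [blockUnion]

theorem mem_blockUnion_verts {𝓐 : Set (Block G)} {v : V} :
    v ∈ (blockUnion G 𝓐).verts ↔ ∃ X ∈ 𝓐, v ∈ (X : G.Subgraph).verts := by
  simp [blockUnion]

theorem blockUnion_union (𝓐 𝓑 : Set (Block G)) :
    blockUnion G (𝓐 ∪ 𝓑) = blockUnion G 𝓐 ⊔ blockUnion G 𝓑 :=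
  iSup_union

theorem connBlocks_empty : ConnBlocks G ∅ := Or.inl rfl

theorem connBlocks_singleton (X : Block G) : ConnBlocks G {X} :=
  Or.inr (by simpa [blockUnion] using X.connected)

theorem ConnBlocks.union {𝓐 𝓑 : Set (Block G)} (hA : ConnBlocks G 𝓐) (hB : ConnBlocks G 𝓑)
    (h : ((blockUnion G 𝓐).verts ∩ (blockUnion G 𝓑).verts).Nonempty) :
    ConnBlocks G (𝓐 ∪ 𝓑) := by
  rcases hA with rfl | hA
  · simpa using hB
  rcases hB with rfl | hB
  · exact (union_empty 𝓐).symm ▸ Or.inr hA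
  exact Or.inr (blockUnion_union 𝓐 𝓑 ▸ SimpleGraph.Subgraph.connected_sup hA.preconnected
    hB.preconnected h)

theorem connBlocks_univ [Finite V] (hG : G.Connected) : ConnBlocks G univ := by
  rcases isEmpty_or_nonempty (Block G) with hE | ⟨⟨B⟩⟩
  · exact Or.inl (univ_eq_empty_iff.2 hE)
  refine Or.inr ((SimpleGraph.Subgraph.connected_iff_forall_exists_walk_subgraph _).2
    ⟨?_, fun {u v} hu _ => ?_⟩)
  · obtain ⟨v, hv⟩ := B.connected.nonempty
    exact ⟨v, mem_blockUnion_verts.2 ⟨B, trivial, hv⟩⟩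
  obtain ⟨p⟩ := hG.preconnected u v
  by_cases huv : u = v
  · subst huv
    exact ⟨.nil, by simpa using hu⟩
  refine ⟨p, (SimpleGraph.Walk.toSubgraph_le_iff fun hp => huv hp.eq).2 fun e he => ?_⟩
  induction e using Sym2.ind with
  | h a b =>
    obtain ⟨X, hX⟩ := exists_block_adj (p.adj_of_mem_edges he)
    exact blockUnion_adj.2 ⟨X, trivial, hX⟩

theorem ConnBlocks.exists_insert {𝓐 𝓓 : Set (Block G)} (hA : ConnBlocks G 𝓐)
    (hD : ConnBlocks G 𝓓) (hDA : 𝓓 ⊂ 𝓐) : ∃ X ∈ 𝓐 \ 𝓓, ConnBlocks G (insert X 𝓓) := by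
  obtain ⟨X₀, hX₀⟩ := exists_of_ssubset hDA
  rcases 𝓓.eq_empty_or_nonempty with rfl | ⟨D, hD𝓓⟩
  · exact ⟨X₀, ⟨hX₀.1, notMem_empty X₀⟩, by simpa using connBlocks_singleton X₀⟩
  suffices ∃ X ∈ 𝓐 \ 𝓓, ((X : G.Subgraph).verts ∩ (blockUnion G 𝓓).verts).Nonempty by
    obtain ⟨X, hX, hmeet⟩ := this
    refine ⟨X, hX, ?_⟩
    simpa using (connBlocks_singleton X).union hD (by simpa [blockUnion] using hmeet)
  -- Otherwise a walk in `G[𝓐]` from `G[𝓓]` to `X₀` leaves `G[𝓓]` along an edge of a block of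
  -- `𝓐 \ 𝓓`, and that block meets `G[𝓓]`.
  by_contra! hdisj
  have hAc := hA.resolve_left (nonempty_of_mem hX₀.1).ne_empty
  obtain ⟨u, hu⟩ := D.connected.nonempty
  obtain ⟨v, hv⟩ := X₀.connected.nonempty
  obtain ⟨w⟩ := hAc.preconnected ⟨u, mem_blockUnion_verts.2 ⟨D, hDA.1 hD𝓓, hu⟩⟩
    ⟨v, mem_blockUnion_verts.2 ⟨X₀, hX₀.1, hv⟩⟩
  obtain ⟨d, -, hd₁, hd₂⟩ := w.exists_boundary_dart {z | (z : V) ∈ (blockUnion G 𝓓).verts}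
    (mem_blockUnion_verts.2 ⟨D, hD𝓓, hu⟩) fun hv' => (hdisj X₀ hX₀).subset ⟨hv, hv'⟩
  obtain ⟨X, hX, hXd⟩ := blockUnion_adj.1 d.adj
  have hX𝓓 : X ∉ 𝓓 := fun h => hd₂ (mem_blockUnion_verts.2 ⟨X, h, hXd.snd_mem⟩)
  exact (hdisj X ⟨hX, hX𝓓⟩).subset ⟨hXd.fst_mem, hd₁⟩

theorem ncard_sdiff_insert_add_one {α : Type*} [Finite α] {s t : Set α} {a : α} (ha : a ∈ s)
    (hat : a ∉ t) : (s \ insert a t).ncard + 1 = (s \ t).ncard := by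
  rw [← ncard_sdiff_singleton_add_one (show a ∈ s \ t from ⟨ha, hat⟩), sdiff_sdiff, union_comm,
    ← insert_eq]

theorem ConnBlocks.insert_induction [Finite V] {𝓐 : Set (Block G)} (hA : ConnBlocks G 𝓐)
    {motive : Set (Block G) → Prop} (top : motive 𝓐)
    (step : ∀ X 𝓓, X ∈ 𝓐 \ 𝓓 → ConnBlocks G 𝓓 → ConnBlocks G (insert X 𝓓) →
      motive (insert X 𝓓) → motive 𝓓)
    {𝓓 : Set (Block G)} (hD : ConnBlocks G 𝓓) (hDA : 𝓓 ⊆ 𝓐) : motive 𝓓 := by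
  induction h : (𝓐 \ 𝓓).ncard generalizing 𝓓 with
  | zero =>
    obtain rfl : 𝓓 = 𝓐 := hDA.antisymm (sdiff_eq_empty.1 ((ncard_eq_zero (toFinite _)).1 h))
    exact top
  | succ n ih =>
    obtain ⟨X, hX, hXD⟩ := hA.exists_insert hD (hDA.ssubset_of_ne (by rintro rfl; simp at h))
    refine step X 𝓓 hX hD hXD (ih hXD (insert_subset hX.1 hDA) ?_)
    have := ncard_sdiff_insert_add_one hX.1 hX.2
    omega

theorem convex_CBP : Convex ℝ (CBP G) := convex_convexHull ℝ _

theorem CBP_subset_Icc : CBP G ⊆ Icc 0 1 :=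
  convexHull_min (by rintro _ ⟨𝓐, -, rfl⟩; exact indicator_one_mem_Icc 𝓐) (convex_Icc 0 1)

theorem incVec_mem_CBP {𝓐 : Set (Block G)} (h : ConnBlocks G 𝓐) : incVec G 𝓐 ∈ CBP G :=
  subset_convexHull ℝ _ ⟨𝓐, h, rfl⟩

theorem zero_mem_CBP : (0 : Block G → ℝ) ∈ CBP G :=
  indicator_empty' (M := ℝ) 1 ▸ incVec_mem_CBP connBlocks_empty

noncomputable instance : DecidableEq (Block G) := Classical.decEq _

theorem single_mem_CBP (B : Block G) : Pi.single B 1 ∈ CBP G := by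
  simpa [incVec] using incVec_mem_CBP (connBlocks_singleton B)

section Polytope

variable [Finite V]

noncomputable instance : Fintype (Block G) := Fintype.ofFinite _

theorem finite_setOf_isFacetOf_CBP : {F | IsFacetOf (CBP G) F}.Finite :=
  (finite_setOf_isFaceOf_convexHull ((finite_range (incVec G)).subset
    (by rintro _ ⟨𝓐, -, rfl⟩; exact mem_range_self 𝓐))).subset fun _ hF => hF.1

theorem exists_walk_incVec_of_subset {𝓓 𝓐 : Set (Block G)} (hD : ConnBlocks G 𝓓)
    (hA : ConnBlocks G 𝓐) (hDA : 𝓓 ⊆ 𝓐) :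
    ∃ w : (polyGraph (CBP G)).Walk (incVec G 𝓓) (incVec G 𝓐), w.length = (𝓐 \ 𝓓).ncard := by
  refine hA.insert_induction (motive := fun 𝓓 =>
    ∃ w : (polyGraph (CBP G)).Walk (incVec G 𝓓) (incVec G 𝓐), w.length = (𝓐 \ 𝓓).ncard)
    ⟨.nil, by simp⟩ ?_ hD hDA
  rintro X 𝓓 ⟨hX𝓐, hX𝓓⟩ hD hXD ⟨w, hw⟩
  have hadj : (polyGraph (CBP G)).Adj (incVec G 𝓓) (incVec G (insert X 𝓓)) :=
    polyGraph_adj_indicator_insert convex_CBP CBP_subset_Icc hX𝓓 (incVec_mem_CBP hD)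
      (incVec_mem_CBP hXD)
  refine ⟨.cons hadj w, ?_⟩
  rw [SimpleGraph.Walk.length_cons, hw, ncard_sdiff_insert_add_one hX𝓐 hX𝓓]

theorem single_mem_vectorSpan_of_subset {𝓓 𝓐 : Set (Block G)} (hD : ConnBlocks G 𝓓)
    (hA : ConnBlocks G 𝓐) (hDA : 𝓓 ⊆ 𝓐) {X : Block G} (hX : X ∈ 𝓐 \ 𝓓) :
    Pi.single X 1 ∈ vectorSpan ℝ (incVec G '' {𝓒 | ConnBlocks G 𝓒 ∧ 𝓓 ⊆ 𝓒}) := by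
  refine hA.insert_induction (motive := fun 𝓓 => ∀ X ∈ 𝓐 \ 𝓓,
    Pi.single X 1 ∈ vectorSpan ℝ (incVec G '' {𝓒 | ConnBlocks G 𝓒 ∧ 𝓓 ⊆ 𝓒}))
    (by simp) ?_ hD hDA X hX
  rintro X 𝓓 hX hD hXD ih Y hY
  by_cases hYX : Y = X
  · subst hYX
    exact single_mem_vectorSpan_of_indicator_mem hX.2 (mem_image_of_mem _ ⟨hD, subset_rfl⟩)
      (mem_image_of_mem _ ⟨hXD, subset_insert _ _⟩)
  · have hsub : {𝓒 | ConnBlocks G 𝓒 ∧ insert X 𝓓 ⊆ 𝓒} ⊆ {𝓒 | ConnBlocks G 𝓒 ∧ 𝓓 ⊆ 𝓒} :=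
      fun 𝓒 h𝓒 => ⟨h𝓒.1, (subset_insert _ _).trans h𝓒.2⟩
    exact vectorSpan_mono ℝ (image_mono hsub) (ih Y ⟨hY.1, by simp [hYX, hY.2]⟩)

theorem polyDim_CBP : polyDim (CBP G) = Fintype.card (Block G) := by
  have htop : vectorSpan ℝ (CBP G) = ⊤ := eq_top_of_forall_single_mem fun B => by
    simpa using vsub_mem_vectorSpan ℝ (single_mem_CBP B) zero_mem_CBP
  rw [polyDim, direction_affineSpan, htop, finrank_top, Module.finrank_fintype_fun_eq_card]

theorem isFacetOf_coordFacet (hG : G.Connected) (B : Block G) (b : Bool) :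
    IsFacetOf (CBP G) (coordFacet (CBP G) B b) := by
  refine ⟨isFaceOf_coordFacet convex_CBP CBP_subset_Icc B b, ?_⟩
  rw [polyDim, direction_affineSpan, polyDim_CBP,
    finrank_vectorSpan_of_forall_apply_eq (fun y hy => hy.2) fun A hAB => ?_]
  cases b
  · have h₁ : Pi.single A 1 ∈ coordFacet (CBP G) B false :=
      ⟨single_mem_CBP A, by simp [hAB.symm]⟩
    have h₀ : (0 : Block G → ℝ) ∈ coordFacet (CBP G) B false := ⟨zero_mem_CBP, by simp⟩
    simpa using vsub_mem_vectorSpan ℝ h₁ h₀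
  · refine vectorSpan_mono ℝ ?_ (single_mem_vectorSpan_of_subset (connBlocks_singleton B)
      (connBlocks_univ hG) (subset_univ _) ⟨trivial, hAB⟩)
    rintro _ ⟨𝓒, ⟨h𝓒, hB𝓒⟩, rfl⟩
    exact ⟨incVec_mem_CBP h𝓒, by simp [incVec, singleton_subset_iff.1 hB𝓒]⟩

theorem two_mul_card_le_ncard_facets (hG : G.Connected) :
    2 * Fintype.card (Block G) ≤ {F | IsFacetOf (CBP G) F}.ncard := by
  have := ncard_le_ncard_of_injOn (s := univ) _ (fun p _ => isFacetOf_coordFacet hG p.2 p.1)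
    (coordFacet_injective zero_mem_CBP single_mem_CBP).injOn finite_setOf_isFacetOf_CBP
  simpa [Nat.card_eq_fintype_card, mul_comm] using this

theorem exists_walk_length_le_card {𝓐 𝓑 : Set (Block G)} (hA : ConnBlocks G 𝓐)
    (hB : ConnBlocks G 𝓑) :
    ∃ w : (polyGraph (CBP G)).Walk (incVec G 𝓐) (incVec G 𝓑),
      w.length ≤ Fintype.card (Block G) := by
  have hcard {s t : Set (Block G)} (h : Disjoint s t) :
      s.ncard + t.ncard ≤ Fintype.card (Block G) := by
    rw [← ncard_union_eq h, ← Nat.card_eq_fintype_card]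
    exact ncard_le_card _
  rcases (𝓐 ∩ 𝓑).eq_empty_or_nonempty with hAB | ⟨X, hXA, hXB⟩
  · obtain ⟨w₁, h₁⟩ := exists_walk_incVec_of_subset connBlocks_empty hA (empty_subset _)
    obtain ⟨w₂, h₂⟩ := exists_walk_incVec_of_subset connBlocks_empty hB (empty_subset _)
    refine ⟨w₁.reverse.append w₂, ?_⟩
    simpa [h₁, h₂] using hcard (disjoint_iff_inter_eq_empty.2 hAB)
  · obtain ⟨v, hv⟩ := X.connected.nonempty
    have hU := hA.union hB ⟨v, mem_blockUnion_verts.2 ⟨X, hXA, hv⟩,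
      mem_blockUnion_verts.2 ⟨X, hXB, hv⟩⟩
    obtain ⟨w₁, h₁⟩ := exists_walk_incVec_of_subset hA hU subset_union_left
    obtain ⟨w₂, h₂⟩ := exists_walk_incVec_of_subset hB hU subset_union_right
    refine ⟨w₁.append w₂.reverse, ?_⟩
    rw [SimpleGraph.Walk.length_append, SimpleGraph.Walk.length_reverse, h₁, h₂,
      union_sdiff_left, union_sdiff_right]
    exact hcard disjoint_sdiff_sdiff

end Polytope

variable [Fintype V] [DecidableEq V]

/-- `CBP(G)` is Hirsch: any two vertices are joined by an edge-path of length at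
most `k - d`, where `k` is the number of facets and `d = dim CBP(G)`. -/
theorem cbp_hirsch (G : SimpleGraph V) (hG : G.Connected) :
    ∀ x ∈ (CBP G).extremePoints ℝ, ∀ y ∈ (CBP G).extremePoints ℝ,
      ∃ w : (polyGraph (CBP G)).Walk x y,
        w.length ≤ {F : Set (Block G → ℝ) | IsFacetOf (CBP G) F}.ncard
          - polyDim (CBP G) := by
  intro x hx y hy
  obtain ⟨𝓐, hA, rfl⟩ := extremePoints_convexHull_subset hx
  obtain ⟨𝓑, hB, rfl⟩ := extremePoints_convexHull_subset hy
  obtain ⟨w, hw⟩ := exists_walk_length_le_card hA hB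
  refine ⟨w, hw.trans ?_⟩
  have := two_mul_card_le_ncard_facets hG
  rw [polyDim_CBP]
  omega

end ConnectedBlocksPaper
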